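/- For every fixed smoothing parameter δ > 0, the smoothed posterior measures μ_{δ,R} converge in total variation distance to the restricted prior μ_F as R → 0; in particular the limit measure μ_F is independent of δ. -/

import Mathlib

open MeasureTheory Filter Real

/-- **Consistency of the smoothed posterior.**
For every fixed smoothing parameter `δ > 0`, the smoothed posterior measures
`μ_{δ,R}` converge in total variation distance to the restricted prior `μ_F`
as `R → 0⁺`; the limit measure `μ_F` is independent of `δ`. -/
theorem smoothed_posterior_tv_convergence
    {d : ℕ} (ρ₀ : (Fin d → ℝ) → ℝ)
    (hρ₀pos : ∀ x, 0 < ρ₀ x) (hρ₀cont : Continuous ρ₀)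
    (μ₀ : Measure (Fin d → ℝ))
    (hμ₀ : μ₀ = volume.withDensity fun x => ENNReal.ofReal (ρ₀ x))
    (hμ₀prob : IsProbabilityMeasure μ₀)
    (G : (Fin d → ℝ) → ℝ) (hGcont : Continuous G)
    (F : Set (Fin d → ℝ)) (hF : F = {x | G x ≤ 0})
    (hPf : 0 < μ₀ F)
    (δ : ℝ) (hδ : 0 < δ)
    (Gδ : (Fin d → ℝ) → ℝ)
    (hGδmeas : Measurable Gδ) (hGδnonneg : ∀ x, 0 ≤ Gδ x)
    (hGδzero : ∀ x, Gδ x = 0 ↔ G x ≤ 0)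
    (Z : ℝ → ℝ)
    (hZ : ∀ R : ℝ, Z R = ∫ x, Real.exp (-(Gδ x) ^ 2 / (2 * R)) ∂μ₀)
    (μ : ℝ → Measure (Fin d → ℝ))
    (hμ : ∀ R : ℝ, μ R = μ₀.withDensity fun x =>
      ENNReal.ofReal (Real.exp (-(Gδ x) ^ 2 / (2 * R)) / Z R))
    (μF : Measure (Fin d → ℝ))
    (hμF : μF = μ₀.withDensity (F.indicator fun _ => (μ₀ F)⁻¹)) :
    Tendsto (fun R : ℝ =>
        ⨆ (A : Set (Fin d → ℝ)) (_ : MeasurableSet A),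
          |((μ R) A).toReal - (μF A).toReal|)
      (nhdsWithin 0 (Set.Ioi 0)) (nhds 0) := by
  classical
  set l : Filter ℝ := nhdsWithin 0 (Set.Ioi 0) with hl
  have hFmeas : MeasurableSet F := by
    rw [hF]; exact (isClosed_le hGcont continuous_const).measurableSet
  have hFne : μ₀ F ≠ ⊤ := measure_ne_top _ _
  set c : ℝ := (μ₀ F).toReal with hc
  have hcpos : 0 < c := ENNReal.toReal_pos hPf.ne' hFne
  set g : ℝ → (Fin d → ℝ) → ℝ := fun R x => Real.exp (-(Gδ x) ^ 2 / (2 * R)) with hgdef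
  set fF : (Fin d → ℝ) → ℝ := F.indicator (fun _ => c⁻¹) with hfFdef
  have hgmeas : ∀ R, Measurable (g R) :=
    fun R => Real.continuous_exp.measurable.comp (((hGδmeas.pow_const 2).neg).div_const _)
  have hgpos : ∀ R x, 0 < g R x := fun R x => Real.exp_pos _
  have hgle1 : ∀ R, 0 < R → ∀ x, g R x ≤ 1 := by
    intro R hR x
    apply Real.exp_le_one_iff.mpr
    apply div_nonpos_of_nonpos_of_nonneg
    · simpa using sq_nonneg (Gδ x)
    · positivity
  have hgF : ∀ R, ∀ x ∈ F, g R x = 1 := by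
    intro R x hx
    have : Gδ x = 0 := (hGδzero x).mpr (by rwa [hF] at hx)
    simp [hgdef, this]
  have hglim : ∀ x, Tendsto (fun R => g R x) l (nhds (F.indicator (fun _ => (1:ℝ)) x)) := by
    intro x
    by_cases hx : x ∈ F
    · have : ∀ᶠ R in l, g R x = 1 := Eventually.of_forall (fun R => hgF R x hx)
      rw [Set.indicator_of_mem hx]
      exact Tendsto.congr' (this.mono fun R h => h.symm) tendsto_const_nhds
    · have ha : 0 < Gδ x := lt_of_le_of_ne (hGδnonneg x) (by
        intro h
        exact hx (by rw [hF]; exact Set.mem_setOf_eq ▸ (hGδzero x).mp h.symm))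
      rw [Set.indicator_of_notMem hx]
      have h2R : Tendsto (fun R : ℝ => (2 * R)⁻¹) l atTop := by
        apply tendsto_inv_nhdsGT_zero.comp
        rw [hl]
        apply tendsto_nhdsWithin_of_tendsto_nhds_of_eventually_within
        · have h : Tendsto (fun R : ℝ => 2 * R) (nhds 0) (nhds 0) := by
            simpa using (by fun_prop :
              Continuous fun R : ℝ => 2 * R).tendsto 0
          exact h.mono_left nhdsWithin_le_nhds
        · filter_upwards [self_mem_nhdsWithin] with R hR
          have hR' : (0:ℝ) < R := hR
          exact Set.mem_Ioi.mpr (by positivity)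
      have hbot : Tendsto (fun R : ℝ => -(Gδ x) ^ 2 * (2 * R)⁻¹) l atBot := by
        apply Tendsto.const_mul_atTop_of_neg _ h2R
        simpa using pow_pos ha 2
      exact (Real.tendsto_exp_atBot.comp hbot).congr
        (fun R => by simp only [Function.comp_apply, hgdef, div_eq_mul_inv])
  have hgint : ∀ R, 0 < R → Integrable (g R) μ₀ := by
    intro R hR
    refine (integrable_const (1:ℝ)).mono' (hgmeas R).aestronglyMeasurable ?_
    filter_upwards with x
    rw [Real.norm_eq_abs, abs_of_nonneg (hgpos R x).le]
    exact hgle1 R hR x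
  have hindint : Integrable (F.indicator fun _ => (1:ℝ)) μ₀ :=
    (integrable_const (1:ℝ)).indicator hFmeas
  have hfFint : Integrable fF μ₀ := (integrable_const (c⁻¹)).indicator hFmeas
  have hfFmeas : Measurable fF := measurable_const.indicator hFmeas
  -- Z tends to c
  have hZtend : Tendsto Z l (nhds c) := by
    have key : Tendsto (fun R => ∫ x, g R x ∂μ₀) l
        (nhds (∫ x, F.indicator (fun _ => (1:ℝ)) x ∂μ₀)) := by
      apply tendsto_integral_filter_of_dominated_convergence (bound := fun _ => (1:ℝ))
      · exact Eventually.of_forall fun R => (hgmeas R).aestronglyMeasurable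
      · filter_upwards [self_mem_nhdsWithin] with R hR
        filter_upwards with x
        rw [Real.norm_eq_abs, abs_of_nonneg (hgpos R x).le]
        exact hgle1 R hR x
      · exact integrable_const 1
      · exact Eventually.of_forall hglim
    rw [integral_indicator_const _ hFmeas] at key
    simp only [smul_eq_mul, mul_one] at key
    exact key.congr (fun R => (hZ R).symm)
  -- Z lower bound
  have hZc : ∀ R, 0 < R → c ≤ Z R := by
    intro R hR
    rw [hZ R]
    have h1 : (c : ℝ) = ∫ x, F.indicator (fun _ => (1:ℝ)) x ∂μ₀ := by
      rw [integral_indicator_const _ hFmeas]; simp; rfl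
    rw [h1]
    apply integral_mono hindint (hgint R hR)
    intro x
    by_cases hx : x ∈ F
    · rw [Set.indicator_of_mem hx, hgF R x hx]
    · rw [Set.indicator_of_notMem hx]; exact (hgpos R x).le
  have hZpos : ∀ R, 0 < R → 0 < Z R := fun R hR => lt_of_lt_of_le hcpos (hZc R hR)
  -- integrability of f R
  set fR : ℝ → (Fin d → ℝ) → ℝ := fun R x => g R x / Z R with hfRdef
  have hfRint : ∀ R, 0 < R → Integrable (fR R) μ₀ := fun R hR => (hgint R hR).div_const _
  have hfRnonneg : ∀ R, 0 < R → ∀ x, 0 ≤ fR R x :=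
    fun R hR x => div_nonneg (hgpos R x).le (hZpos R hR).le
  have hfRle : ∀ R, 0 < R → ∀ x, fR R x ≤ 1 / c := by
    intro R hR x
    exact div_le_div₀ zero_le_one (hgle1 R hR x) hcpos (hZc R hR)
  have hfFle : ∀ x, |fF x| ≤ 1 / c := by
    intro x
    by_cases hx : x ∈ F
    · rw [hfFdef, Set.indicator_of_mem hx, abs_of_nonneg (by positivity), inv_eq_one_div]
    · rw [hfFdef, Set.indicator_of_notMem hx]; simp; positivity
  -- toReal formulas
  have hμRA : ∀ R, 0 < R → ∀ A : Set (Fin d → ℝ), MeasurableSet A →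
      ((μ R) A).toReal = ∫ x in A, fR R x ∂μ₀ := by
    intro R hR A hA
    rw [hμ R, withDensity_apply _ hA]
    rw [integral_eq_lintegral_of_nonneg_ae
      (ae_of_all _ fun x => hfRnonneg R hR x)
      (((hgmeas R).div_const _).aestronglyMeasurable.restrict)]
  have hfFofReal : (F.indicator fun _ => (μ₀ F)⁻¹) = fun x => ENNReal.ofReal (fF x) := by
    funext x
    by_cases hx : x ∈ F
    · rw [Set.indicator_of_mem hx, hfFdef, Set.indicator_of_mem hx,
        ENNReal.ofReal_inv_of_pos hcpos, hc, ENNReal.ofReal_toReal hFne]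
    · rw [Set.indicator_of_notMem hx, hfFdef, Set.indicator_of_notMem hx, ENNReal.ofReal_zero]
  have hμFA : ∀ A : Set (Fin d → ℝ), MeasurableSet A →
      (μF A).toReal = ∫ x in A, fF x ∂μ₀ := by
    intro A hA
    rw [hμF, withDensity_apply _ hA, hfFofReal]
    rw [integral_eq_lintegral_of_nonneg_ae
      (ae_of_all _ fun x => Set.indicator_nonneg (fun _ _ => by positivity) x)
      (hfFmeas.aestronglyMeasurable.restrict)]
  -- the L¹ bound tends to 0
  set I : ℝ → ℝ := fun R => ∫ x, |fR R x - fF x| ∂μ₀ with hIdef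
  have hInonneg : ∀ R, 0 ≤ I R := fun R => integral_nonneg fun x => abs_nonneg _
  have hItend : Tendsto I l (nhds 0) := by
    have key : Tendsto (fun R => ∫ x, |fR R x - fF x| ∂μ₀) l
        (nhds (∫ _ : (Fin d → ℝ), (0:ℝ) ∂μ₀)) := by
      apply tendsto_integral_filter_of_dominated_convergence (bound := fun _ => 2 / c)
      · exact Eventually.of_forall fun R =>
          (((hgmeas R).div_const _).sub hfFmeas).abs.aestronglyMeasurable
      · filter_upwards [self_mem_nhdsWithin] with R hR
        filter_upwards with x
        rw [Real.norm_eq_abs, abs_abs]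
        calc |fR R x - fF x| ≤ |fR R x| + |fF x| := by
              rw [sub_eq_add_neg]
              exact (abs_add_le _ _).trans (by rw [abs_neg])
          _ ≤ 1 / c + 1 / c := by
              refine add_le_add ?_ (hfFle x)
              rw [abs_of_nonneg (hfRnonneg R hR x)]
              exact hfRle R hR x
          _ = 2 / c := by ring
      · exact integrable_const _
      · refine Eventually.of_forall fun x => ?_
        have hfFx : fF x = F.indicator (fun _ => (1:ℝ)) x / c := by
          by_cases hx : x ∈ F
          · rw [hfFdef, Set.indicator_of_mem hx, Set.indicator_of_mem hx, inv_eq_one_div]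
          · rw [hfFdef, Set.indicator_of_notMem hx, Set.indicator_of_notMem hx, zero_div]
        have h1 : Tendsto (fun R => fR R x) l (nhds (fF x)) := by
          rw [hfFx]
          exact (hglim x).div hZtend hcpos.ne'
        have := (h1.sub (tendsto_const_nhds (x := fF x))).abs
        simpa using this
    simpa using key
  -- squeeze
  apply squeeze_zero' (g := I)
  · exact Eventually.of_forall fun R =>
      Real.iSup_nonneg fun A => Real.iSup_nonneg fun _ => abs_nonneg _
  · filter_upwards [self_mem_nhdsWithin] with R hR
    refine Real.iSup_le (fun A => Real.iSup_le (fun hA => ?_) (hInonneg R)) (hInonneg R)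
    rw [hμRA R hR A hA, hμFA A hA,
      ← integral_sub ((hfRint R hR).integrableOn) (hfFint.integrableOn)]
    calc |∫ x in A, (fR R x - fF x) ∂μ₀| ≤ ∫ x in A, |fR R x - fF x| ∂μ₀ := by
          simpa [Real.norm_eq_abs] using
            norm_integral_le_integral_norm (μ := μ₀.restrict A) (f := fun x => fR R x - fF x)
      _ ≤ I R := setIntegral_le_integral ((hfRint R hR).sub hfFint).abs
          (ae_of_all _ fun x => abs_nonneg _)
  · exact hItend
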